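/- For every nonnegative integer t divisible by 3, the number of 3×3 matrices with nonnegative integer entries whose row sums, column sums, and both main diagonal sums all equal t, is nonzero; moreover for t not divisible by 3 this count with both diagonal conditions imposed and the formula (2/9)t² + (2/3)t + 1 need not agree, i.e., the formula is asserted only when 3 | t, in which case the count equals (2t² + 6t + 9)/9. -/

import Mathlib

/-- The number of 3×3 matrices with nonnegative integer entries whose row sums,
column sums, and both main diagonal sums all equal `t`. -/
noncomputable def magicWithRepeats3 (t : ℕ) : ℕ :=
  Set.ncard {M : Matrix (Fin 3) (Fin 3) ℕ |
    (∀ i, ∑ j, M i j = t) ∧ (∀ j, ∑ i, M i j = t) ∧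
    M 0 0 + M 1 1 + M 2 2 = t ∧ M 0 2 + M 1 1 + M 2 0 = t}

/-!
Adding the two diagonals, the middle row and the middle column counts every entry once and the
center three more times, so `4t = 3t + 3 M₁₁`: the center is `t / 3`, and there is no square
unless `3 ∣ t`. For `t = 3c` a square is determined by its entries `p = M₂₁` and `q = M₁₂`,
which range over the pairs in `[0, 2c]²` of equal parity (their sum is `2 M₀₀`). Writing
`p = 2i + e`, `q = 2j + e` with `e ∈ {0, 1}` shows that there are
`(c + 1)² + c² = (2t² + 6t + 9) / 9` of them.
-/

open Finset

def IsMagicSquare (t : ℕ) (M : Matrix (Fin 3) (Fin 3) ℕ) : Prop :=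
  (∀ i, ∑ j, M i j = t) ∧ (∀ j, ∑ i, M i j = t) ∧
    M 0 0 + M 1 1 + M 2 2 = t ∧ M 0 2 + M 1 1 + M 2 0 = t

theorem magicWithRepeats3_eq_ncard (t : ℕ) :
    magicWithRepeats3 t = {M | IsMagicSquare t M}.ncard :=
  rfl

theorem isMagicSquare_iff {t : ℕ} {M : Matrix (Fin 3) (Fin 3) ℕ} :
    IsMagicSquare t M ↔
      M 0 0 + M 0 1 + M 0 2 = t ∧ M 1 0 + M 1 1 + M 1 2 = t ∧ M 2 0 + M 2 1 + M 2 2 = t ∧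
      M 0 0 + M 1 0 + M 2 0 = t ∧ M 0 1 + M 1 1 + M 2 1 = t ∧ M 0 2 + M 1 2 + M 2 2 = t ∧
      M 0 0 + M 1 1 + M 2 2 = t ∧ M 0 2 + M 1 1 + M 2 0 = t := by
  simp only [IsMagicSquare, Fin.forall_fin_succ, Fin.sum_univ_three, IsEmpty.forall_iff]
  tauto

theorem IsMagicSquare.three_mul_center {t : ℕ} {M : Matrix (Fin 3) (Fin 3) ℕ}
    (h : IsMagicSquare t M) : 3 * M 1 1 = t := by
  rw [isMagicSquare_iff] at h
  omega

theorem magicWithRepeats3_eq_zero_of_not_dvd {t : ℕ} (ht : ¬ 3 ∣ t) :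
    magicWithRepeats3 t = 0 := by
  have hempty : {M | IsMagicSquare t M} = ∅ :=
    Set.eq_empty_of_forall_notMem fun M hM => ht ⟨_, hM.three_mul_center.symm⟩
  rw [magicWithRepeats3_eq_ncard, hempty, Set.ncard_empty]

/-- The square with center `c` and entries `M₂₁ = 2i + e`, `M₁₂ = 2j + e`. -/
def magicSquareOf (c e i j : ℕ) : Matrix (Fin 3) (Fin 3) ℕ :=
  !![i + j + e, 2 * c - 2 * i - e, c + i - j;
     2 * c - 2 * j - e, c, 2 * j + e;
     c + j - i, 2 * i + e, 2 * c - i - j - e]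

def magicSquareParams (c : ℕ) : Finset (Σ _ : ℕ, ℕ × ℕ) :=
  (range 2).sigma fun e => range (c + 1 - e) ×ˢ range (c + 1 - e)

theorem card_magicSquareParams (c : ℕ) : #(magicSquareParams c) = (c + 1) ^ 2 + c ^ 2 := by
  simp [magicSquareParams, sq, sum_range_succ]

theorem setOf_isMagicSquare_three_mul (c : ℕ) :
    {M | IsMagicSquare (3 * c) M} =
      (fun x : Σ _ : ℕ, ℕ × ℕ => magicSquareOf c x.1 x.2.1 x.2.2) '' ↑(magicSquareParams c) := by
  ext M
  simp only [Set.mem_ofPred_eq, Set.mem_image, Sigma.exists, mem_coe, magicSquareParams,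
    mem_sigma, mem_product, mem_range, Prod.exists]
  constructor
  · intro h
    rw [isMagicSquare_iff] at h
    refine ⟨M 2 1 % 2, M 2 1 / 2, M 1 2 / 2, by omega, ?_⟩
    ext i j
    fin_cases i <;> fin_cases j <;> simp [magicSquareOf] <;> omega
  · rintro ⟨e, i, j, ⟨he, hi, hj⟩, rfl⟩
    rw [isMagicSquare_iff]
    simp only [magicSquareOf, Matrix.of_apply, Matrix.cons_val', Matrix.cons_val,
      Matrix.cons_val_zero, Matrix.cons_val_one, Matrix.cons_val_fin_one]
    omega

theorem magicSquareOf_injOn (c : ℕ) :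
    Set.InjOn (fun x : Σ _ : ℕ, ℕ × ℕ => magicSquareOf c x.1 x.2.1 x.2.2)
      ↑(magicSquareParams c) := by
  rintro ⟨e, i, j⟩ hx ⟨e', i', j'⟩ hx' h
  simp only [magicSquareParams, coe_sigma, Set.mem_sigma_iff, mem_coe, mem_range] at hx hx'
  have h21 : 2 * i + e = 2 * i' + e' := congrFun₂ h 2 1
  have h12 : 2 * j + e = 2 * j' + e' := congrFun₂ h 1 2
  obtain ⟨rfl, rfl, rfl⟩ : e = e' ∧ i = i' ∧ j = j' := by omega
  rfl

theorem magicWithRepeats3_three_mul (c : ℕ) :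
    magicWithRepeats3 (3 * c) = (c + 1) ^ 2 + c ^ 2 := by
  rw [magicWithRepeats3_eq_ncard, setOf_isMagicSquare_three_mul,
    (magicSquareOf_injOn c).ncard_image, Set.ncard_coe_finset, card_magicSquareParams]

theorem macmahon_magic_3x3_dvd_three :
    (∀ t : ℕ, 3 ∣ t → magicWithRepeats3 t ≠ 0 ∧
      (magicWithRepeats3 t : ℚ) = (2 * (t : ℚ) ^ 2 + 6 * (t : ℚ) + 9) / 9) ∧
    ∃ t : ℕ, ¬ (3 ∣ t) ∧
      (magicWithRepeats3 t : ℚ) ≠ (2 * (t : ℚ) ^ 2 + 6 * (t : ℚ) + 9) / 9 := by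
  refine ⟨?_, 1, by norm_num, ?_⟩
  · rintro t ⟨c, rfl⟩
    rw [magicWithRepeats3_three_mul]
    refine ⟨by positivity, ?_⟩
    push_cast
    ring
  · rw [magicWithRepeats3_eq_zero_of_not_dvd (by norm_num)]
    norm_num
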